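/- arXiv:2403.05490 — 2 statements merged into one kernel-verified Lean document; each statement's English description precedes it below -/
import Mathlib

section
/- Let X and Y be random variables (or random vectors) with joint density p_{XY} and marginals p_X, p_Y, and let F be any measurable real-valued function of (x,y). Then I(X;Y) ≥ E_{p_{XY}}[F(X,Y)] - E_{p_X ⊗ p_Y}[exp(F(X,Y))] + 1, where I(X;Y) = KL(p_{XY} ‖ p_X ⊗ p_Y). -/
/-!
Tilting `ν` by `exp F` gives a probability measure `ν_F` with
`log (dμ/dν_F) = log (dμ/dν) - F + log ∫ exp F dν`, so Gibbs' inequality `KL(μ ‖ ν_F) ≥ 0` is the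
Donsker–Varadhan bound `KL(μ ‖ ν) ≥ ∫ F dμ - log ∫ exp F dν`. The NWJ bound follows from
`log t ≤ t - 1`.
-/

open MeasureTheory

/-- Kullback–Leibler divergence `KL(μ ‖ ν) = ∫ log (dμ/dν) dμ`. -/
noncomputable def klDiv' {α : Type*} [MeasurableSpace α] (μ ν : Measure α) : ℝ :=
  ∫ x, Real.log (μ.rnDeriv ν x).toReal ∂μ

namespace MeasureTheory

variable {α : Type*} [MeasurableSpace α] {μ ν : Measure α}

lemma Measure.AbsolutelyContinuous.neZero [NeZero μ] (h : μ ≪ ν) : NeZero ν :=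
  ⟨fun hν ↦ NeZero.ne μ (Measure.absolutelyContinuous_zero_iff.mp (hν ▸ h))⟩

variable [IsProbabilityMeasure μ] [SigmaFinite ν] {f : α → ℝ}

lemma integral_sub_log_integral_exp_le_integral_llr (hμν : μ ≪ ν) (hfμ : Integrable f μ)
    (hfν : Integrable (fun x ↦ Real.exp (f x)) ν) (h_int : Integrable (llr μ ν) μ) :
    ∫ x, f x ∂μ - Real.log (∫ x, Real.exp (f x) ∂ν) ≤ ∫ x, llr μ ν x ∂μ := by
  have := hμν.neZero
  have : IsProbabilityMeasure (ν.tilted f) := isProbabilityMeasure_tilted hfν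
  have hμν' : μ ≪ ν.tilted f := hμν.trans (absolutelyContinuous_tilted hfν)
  have gibbs := InformationTheory.integral_llr_add_sub_measure_univ_nonneg hμν'
    (integrable_llr_tilted_right hμν hfμ h_int hfν)
  rw [integral_llr_tilted_right hμν hfμ hfν h_int] at gibbs
  simp only [probReal_univ] at gibbs
  linarith

lemma integral_sub_integral_exp_add_one_le_integral_llr (hμν : μ ≪ ν) (hfμ : Integrable f μ)
    (hfν : Integrable (fun x ↦ Real.exp (f x)) ν) (h_int : Integrable (llr μ ν) μ) :
    ∫ x, f x ∂μ - ∫ x, Real.exp (f x) ∂ν + 1 ≤ ∫ x, llr μ ν x ∂μ := by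
  have := hμν.neZero
  have := Real.log_le_sub_one_of_pos (integral_exp_pos hfν)
  have := integral_sub_log_integral_exp_le_integral_llr hμν hfμ hfν h_int
  linarith

end MeasureTheory

theorem nwj_lower_bound_general {α β : Type*} [MeasurableSpace α] [MeasurableSpace β]
    (μ : Measure (α × β)) [IsProbabilityMeasure μ] (F : α × β → ℝ)
    (hac : μ ≪ (μ.map Prod.fst).prod (μ.map Prod.snd))
    (hFint : Integrable F μ)
    (hexp : Integrable (fun p => Real.exp (F p))
      ((μ.map Prod.fst).prod (μ.map Prod.snd)))
    (hlog : Integrable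
      (fun p => Real.log
        (μ.rnDeriv ((μ.map Prod.fst).prod (μ.map Prod.snd)) p).toReal) μ) :
    klDiv' μ ((μ.map Prod.fst).prod (μ.map Prod.snd))
      ≥ (∫ p, F p ∂μ)
        - (∫ p, Real.exp (F p) ∂((μ.map Prod.fst).prod (μ.map Prod.snd)))
        + 1 := by
  have : IsProbabilityMeasure (μ.map Prod.fst) := Measure.isProbabilityMeasure_map (by fun_prop)
  have : IsProbabilityMeasure (μ.map Prod.snd) := Measure.isProbabilityMeasure_map (by fun_prop)
  exact integral_sub_integral_exp_add_one_le_integral_llr hac hFint hexp hlog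

theorem nwj_lower_bound {α β : Type*} [MeasurableSpace α] [MeasurableSpace β]
    (μ : Measure (α × β)) [IsProbabilityMeasure μ] (F : α × β → ℝ)
    (hF : Measurable F)
    (hac : μ ≪ (μ.map Prod.fst).prod (μ.map Prod.snd))
    (hFint : Integrable F μ)
    (hexp : Integrable (fun p => Real.exp (F p))
      ((μ.map Prod.fst).prod (μ.map Prod.snd)))
    (hlog : Integrable
      (fun p => Real.log
        (μ.rnDeriv ((μ.map Prod.fst).prod (μ.map Prod.snd)) p).toReal) μ) :
    klDiv' μ ((μ.map Prod.fst).prod (μ.map Prod.snd))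
      ≥ (∫ p, F p ∂μ)
        - (∫ p, Real.exp (F p) ∂((μ.map Prod.fst).prod (μ.map Prod.snd)))
        + 1 :=
  nwj_lower_bound_general μ F hac hFint hexp hlog
end

section
/- With Σ_M = σ² I_M + σ₀² J_M and Σ̃_M = diag(σ² + σ₀², Σ_{M-1}), we have (1/2)[tr(Σ̃_M⁻¹ Σ_M) - M + log(det Σ̃_M / det Σ_M)] = (1/2) log[(1 + σ₀²/σ²)(1 - σ₀²/(σ² + M σ₀²))]. -/
/-
The trace term vanishes against `- M`: `Σ̃_M` is block diagonal for the partition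
`{0} ∪ {1, …, M-1}` of the indices, hence so is its inverse, and `Σ_M` agrees with `Σ̃_M` on the
diagonal blocks, so `Σ̃_M⁻¹ Σ_M` has unit diagonal. For the determinants, `Σ_M` is `σ² I` plus a
rank-one matrix (matrix determinant lemma), and `Σ̃_M` expands along its first row to
`(σ² + σ₀²) det Σ_{M-1}`. What remains is an identity of rational functions.
-/

open Matrix

/-- `Σ_M`: diagonal entries `σ² + σ₀²`, off-diagonal entries `σ₀²`. -/
noncomputable def SigM (M : ℕ) (σ σ₀ : ℝ) : Matrix (Fin M) (Fin M) ℝ :=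
  Matrix.of fun i j => if i = j then σ ^ 2 + σ₀ ^ 2 else σ₀ ^ 2

/-- `Σ̃_M`: the block-diagonal matrix `diag(σ² + σ₀², Σ_{M-1})`, i.e. `Σ_M` with the
off-diagonal entries in the first row and column replaced by `0`. -/
noncomputable def SigTildeM (M : ℕ) (σ σ₀ : ℝ) : Matrix (Fin M) (Fin M) ℝ :=
  Matrix.of fun i j =>
    if i = j then σ ^ 2 + σ₀ ^ 2 else if i.val = 0 ∨ j.val = 0 then 0 else σ₀ ^ 2

section BlockDiagonal

variable {ι α R : Type*} [Fintype ι] [DecidableEq ι] [LinearOrder α] [CommRing R]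

theorem Matrix.inv_apply_eq_zero_of_blockDiagonal {A : Matrix ι ι R} {b : ι → α}
    (hA : ∀ i j, b i ≠ b j → A i j = 0) (i j : ι) (hij : b i ≠ b j) : A⁻¹ i j = 0 := by
  by_cases hdet : IsUnit A.det
  · let := invertibleOfIsUnitDet A hdet
    rcases hij.lt_or_gt with hlt | hgt
    · exact blockTriangular_inv_of_blockTriangular (b := OrderDual.toDual ∘ b)
        (fun i j h => hA i j h.ne') hlt
    · exact blockTriangular_inv_of_blockTriangular (fun i j h => hA i j h.ne') hgt
  · simp [nonsing_inv_apply_not_isUnit A hdet]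

theorem Matrix.trace_inv_mul_eq_card_of_blockDiagonal {A B : Matrix ι ι R} {b : ι → α}
    (hdet : IsUnit A.det) (hA : ∀ i j, b i ≠ b j → A i j = 0)
    (hB : ∀ i j, b i = b j → B i j = A i j) :
    (A⁻¹ * B).trace = Fintype.card ι := by
  have hoff : (A⁻¹ * (B - A)).trace = 0 := by
    refine Finset.sum_eq_zero fun i _ => Finset.sum_eq_zero fun j _ => ?_
    by_cases hij : b i = b j
    · simp [hB j i hij.symm]
    · simp [inv_apply_eq_zero_of_blockDiagonal hA i j hij]
  rw [← add_sub_cancel A B, Matrix.mul_add, trace_add, nonsing_inv_mul A hdet, trace_one, hoff,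
    add_zero]

end BlockDiagonal

theorem Matrix.det_succ_of_row_zero_eq_zero {R : Type*} [CommRing R] {n : ℕ}
    (A : Matrix (Fin (n + 1)) (Fin (n + 1)) R) (hA : ∀ j, j ≠ 0 → A 0 j = 0) :
    A.det = A 0 0 * (A.submatrix Fin.succ Fin.succ).det := by
  rw [det_succ_row_zero, Fin.sum_univ_succ, Finset.sum_eq_zero fun j _ => by
    rw [hA _ (Fin.succ_ne_zero j)]; ring]
  simp

theorem Matrix.det_of_ite_add_const {ι K : Type*} [Fintype ι] [DecidableEq ι] [Field K]
    {a : K} (ha : a ≠ 0) (c : K) :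
    (of fun i j : ι => if i = j then a + c else c).det
      = a ^ Fintype.card ι * (1 + Fintype.card ι * c / a) := by
  have hrank_one : (of fun i j : ι => if i = j then a + c else c)
      = a • (1 + replicateCol Unit (fun _ : ι => c / a)
        * replicateRow Unit (fun _ : ι => (1 : K))) := by
    ext i j
    by_cases h : i = j <;> simp [h, replicateCol, replicateRow, mul_apply] <;> field_simp
  rw [hrank_one, det_smul, det_one_add_replicateCol_mul_replicateRow]
  simp [dotProduct, mul_div_assoc]

theorem det_SigM (M : ℕ) {σ : ℝ} (hσ : σ ≠ 0) (σ₀ : ℝ) :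
    (SigM M σ σ₀).det = (σ ^ 2) ^ M * (1 + M * σ₀ ^ 2 / σ ^ 2) := by
  unfold SigM
  simpa using det_of_ite_add_const (pow_ne_zero 2 hσ) (σ₀ ^ 2) (ι := Fin M)

theorem SigTildeM_submatrix_succ (n : ℕ) (σ σ₀ : ℝ) :
    (SigTildeM (n + 1) σ σ₀).submatrix Fin.succ Fin.succ = SigM n σ σ₀ := by
  ext i j
  simp [SigTildeM, SigM]

theorem det_SigTildeM_succ (n : ℕ) (σ σ₀ : ℝ) :
    (SigTildeM (n + 1) σ σ₀).det = (σ ^ 2 + σ₀ ^ 2) * (SigM n σ σ₀).det := by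
  rw [det_succ_of_row_zero_eq_zero _ fun j hj => by simp [SigTildeM, Ne.symm hj],
    SigTildeM_submatrix_succ]
  simp [SigTildeM]

theorem trace_inv_SigTildeM_mul_SigM (n : ℕ) {σ : ℝ} (hσ : σ ≠ 0) (σ₀ : ℝ) :
    ((SigTildeM (n + 1) σ σ₀)⁻¹ * SigM (n + 1) σ σ₀).trace = n + 1 := by
  have hdet : IsUnit (SigTildeM (n + 1) σ σ₀).det := by
    rw [isUnit_iff_ne_zero, det_SigTildeM_succ, det_SigM n hσ]
    positivity
  have := trace_inv_mul_eq_card_of_blockDiagonal (B := SigM (n + 1) σ σ₀)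
    (b := fun i : Fin (n + 1) => decide (i = 0)) hdet (fun i j hij => ?_) (fun i j hij => ?_)
  · simpa using this
  · simp only [ne_eq, decide_eq_decide] at hij
    have hne : i ≠ j := by rintro rfl; exact hij Iff.rfl
    have h0 : (i : ℕ) = 0 ∨ (j : ℕ) = 0 := by simp only [Fin.val_eq_zero_iff]; tauto
    simp only [SigTildeM, of_apply, if_neg hne, if_pos h0]
  · simp only [decide_eq_decide] at hij
    by_cases hi : i = 0 <;> by_cases hj : j = 0 <;> simp_all [SigTildeM, SigM]

theorem kl_formula_gives_one_vs_rest_mi_general (M : ℕ) (hM : 2 ≤ M) (σ σ₀ : ℝ)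
    (hσ : 0 < σ) :
    (1 / 2) * (((SigTildeM M σ σ₀)⁻¹ * SigM M σ σ₀).trace - M
        + Real.log ((SigTildeM M σ σ₀).det / (SigM M σ σ₀).det))
      = (1 / 2) * Real.log
          ((1 + σ₀ ^ 2 / σ ^ 2) * (1 - σ₀ ^ 2 / (σ ^ 2 + M * σ₀ ^ 2))) := by
  obtain ⟨n, rfl⟩ : ∃ n, M = n + 2 := ⟨M - 2, by omega⟩
  have hratio : (SigTildeM (n + 2) σ σ₀).det / (SigM (n + 2) σ σ₀).det
      = (1 + σ₀ ^ 2 / σ ^ 2) * (1 - σ₀ ^ 2 / (σ ^ 2 + (n + 2 : ℕ) * σ₀ ^ 2)) := by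
    rw [det_SigTildeM_succ, det_SigM _ hσ.ne', det_SigM _ hσ.ne']
    field_simp
    push_cast
    ring
  rw [trace_inv_SigTildeM_mul_SigM _ hσ.ne', hratio]
  push_cast
  ring

theorem kl_formula_gives_one_vs_rest_mi (M : ℕ) (hM : 2 ≤ M) (σ σ₀ : ℝ)
    (hσ : 0 < σ) (hσ₀ : 0 < σ₀) :
    (1 / 2) * (((SigTildeM M σ σ₀)⁻¹ * SigM M σ σ₀).trace - M
        + Real.log ((SigTildeM M σ σ₀).det / (SigM M σ σ₀).det))
      = (1 / 2) * Real.log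
          ((1 + σ₀ ^ 2 / σ ^ 2) * (1 - σ₀ ^ 2 / (σ ^ 2 + M * σ₀ ^ 2))) :=
  kl_formula_gives_one_vs_rest_mi_general M hM σ σ₀ hσ
end
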